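/- arXiv:2501.13408 — 2 statements merged into one kernel-verified Lean document; each statement's English description precedes it below -/
import Mathlib

section
/- Let (T, Γ) be a Γ-semigroup with zero 0 and let H be a 0-least Γ-two-sided ideal of T that contains at least one 0-least Γ-left ideal of T. Then H equals the union of all 0-least Γ-left ideals of T contained in H. -/
/-- The set product AΓB = {aγb : a ∈ A, γ ∈ Γ, b ∈ B} for a Γ-semigroup
with multiplication `mul : T → G → T → T`. -/
def gprod {T G : Type*} (mul : T → G → T → T) (A B : Set T) : Set T :=
  {x | ∃ a ∈ A, ∃ γ : G, ∃ b ∈ B, x = mul a γ b}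

/-- A nonempty subset B with TΓB ⊆ B. -/
def IsLeftIdeal {T G : Type*} (mul : T → G → T → T) (B : Set T) : Prop :=
  B.Nonempty ∧ gprod mul Set.univ B ⊆ B

/-- A nonempty subset B with BΓT ⊆ B. -/
def IsRightIdeal {T G : Type*} (mul : T → G → T → T) (B : Set T) : Prop :=
  B.Nonempty ∧ gprod mul B Set.univ ⊆ B

/-- A Γ-two-sided ideal. -/
def IsTwoSidedIdeal {T G : Type*} (mul : T → G → T → T) (B : Set T) : Prop :=
  IsLeftIdeal mul B ∧ IsRightIdeal mul B

/-- z is a zero element: eαz = zαe = z for all e, α. -/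
def IsZero {T G : Type*} (mul : T → G → T → T) (z : T) : Prop :=
  ∀ (e : T) (α : G), mul e α z = z ∧ mul z α e = z

/-- A least Γ-left ideal: every Γ-left ideal contained in it equals it. -/
def IsLeastLeftIdeal {T G : Type*} (mul : T → G → T → T) (H : Set T) : Prop :=
  IsLeftIdeal mul H ∧ ∀ B : Set T, IsLeftIdeal mul B → B ⊆ H → B = H

/-- A least Γ-two-sided ideal. -/
def IsLeastTwoSidedIdeal {T G : Type*} (mul : T → G → T → T) (A : Set T) : Prop :=
  IsTwoSidedIdeal mul A ∧ ∀ B : Set T, IsTwoSidedIdeal mul B → B ⊆ A → B = A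

/-- A 0-least Γ-left ideal. -/
def IsZeroLeastLeftIdeal {T G : Type*} (mul : T → G → T → T) (z : T) (H : Set T) : Prop :=
  IsLeftIdeal mul H ∧ H ≠ {z} ∧
    ∀ B : Set T, IsLeftIdeal mul B → B ⊆ H → B = {z} ∨ B = H

/-- A 0-least Γ-right ideal. -/
def IsZeroLeastRightIdeal {T G : Type*} (mul : T → G → T → T) (z : T) (H : Set T) : Prop :=
  IsRightIdeal mul H ∧ H ≠ {z} ∧
    ∀ B : Set T, IsRightIdeal mul B → B ⊆ H → B = {z} ∨ B = H

/-- A 0-least Γ-two-sided ideal. -/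
def IsZeroLeastTwoSidedIdeal {T G : Type*} (mul : T → G → T → T) (z : T) (H : Set T) : Prop :=
  IsTwoSidedIdeal mul H ∧ H ≠ {z} ∧
    ∀ B : Set T, IsTwoSidedIdeal mul B → B ⊆ H → B = {z} ∨ B = H

/-- 0-simple: TΓT ≠ {0} and the only Γ-two-sided ideals are {0} and T. -/
def IsZeroSimple {T G : Type*} (mul : T → G → T → T) (z : T) : Prop :=
  gprod mul Set.univ Set.univ ≠ {z} ∧
    ∀ B : Set T, IsTwoSidedIdeal mul B → B = {z} ∨ B = Set.univ

/-- e is an idempotent: eαe = e for some α. -/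
def IsIdempotent {T G : Type*} (mul : T → G → T → T) (e : T) : Prop :=
  ∃ α : G, mul e α e = e

/-- The partial order on idempotents: e ≤ f iff exf = fye = e for some x, y ∈ Γ. -/
def IdemLe {T G : Type*} (mul : T → G → T → T) (e f : T) : Prop :=
  ∃ x y : G, mul e x f = e ∧ mul f y e = e

/-- A primitive idempotent: nonzero, and minimal among nonzero idempotents. -/
def IsPrimitiveIdempotent {T G : Type*} (mul : T → G → T → T) (z e : T) : Prop :=
  e ≠ z ∧ IsIdempotent mul e ∧
    ∀ f : T, f ≠ z → IsIdempotent mul f → IdemLe mul f e → f = e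

/-- Completely 0-simple: 0-simple with a primitive idempotent. -/
def IsCompletelyZeroSimple {T G : Type*} (mul : T → G → T → T) (z : T) : Prop :=
  IsZeroSimple mul z ∧ ∃ e : T, IsPrimitiveIdempotent mul z e

/-- Green's relation L: e L f iff {e} ∪ TΓe = {f} ∪ TΓf. -/
def LRel {T G : Type*} (mul : T → G → T → T) (e f : T) : Prop :=
  insert e (gprod mul Set.univ {e}) = insert f (gprod mul Set.univ {f})

/-- Green's relation R: e R f iff {e} ∪ eΓT = {f} ∪ fΓT. -/
def RRel {T G : Type*} (mul : T → G → T → T) (e f : T) : Prop :=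
  insert e (gprod mul {e} Set.univ) = insert f (gprod mul {f} Set.univ)

/-- Green's relation D = L ∘ R. -/
def DRel {T G : Type*} (mul : T → G → T → T) (e f : T) : Prop :=
  ∃ c : T, LRel mul e c ∧ RRel mul c f

/-- The Γ-two-sided ideal generated by e: {e} ∪ TΓe ∪ eΓT ∪ TΓeΓT. -/
def GenTwo {T G : Type*} (mul : T → G → T → T) (e : T) : Set T :=
  {e} ∪ gprod mul Set.univ {e} ∪ gprod mul {e} Set.univ ∪
    gprod mul (gprod mul Set.univ {e}) Set.univ

/-- A Γ-prime ideal. -/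
def IsPrimeIdeal {T G : Type*} (mul : T → G → T → T) (Q : Set T) : Prop :=
  IsTwoSidedIdeal mul Q ∧
    ∀ E F : Set T, IsTwoSidedIdeal mul E → IsTwoSidedIdeal mul F →
      gprod mul E F ⊆ Q → E ⊆ Q ∨ F ⊆ Q

/-- A Γ-two-sided ideal of the Γ-semigroup H (a subset of T closed as an ideal of H). -/
def IsTwoSidedIdealIn {T G : Type*} (mul : T → G → T → T) (H B : Set T) : Prop :=
  B.Nonempty ∧ B ⊆ H ∧ gprod mul H B ⊆ B ∧ gprod mul B H ⊆ B


/-!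
Fix a 0-least Γ-left ideal `L ⊆ H`. The set `L ∪ LΓT` is a Γ-two-sided ideal, nonzero and
contained in `H`, so it is `H`. Every element of `LΓT` is some `xγa` with `x ∈ L`, hence lies in
`Lγa`, which is a Γ-left ideal inside `H`. Pulling a Γ-left ideal `B ⊆ Lγa` back to
`{x ∈ L | xγa ∈ B}` and using the minimality of `L` shows that `Lγa` is either `{0}` (and then
`xγa = 0 ∈ L`) or itself a 0-least Γ-left ideal.
-/

section

variable {T G : Type*} {mul : T → G → T → T}

theorem IsZero.mem_of_isLeftIdeal [Nonempty G] {z : T} (hz : IsZero mul z) {B : Set T}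
    (hB : IsLeftIdeal mul B) : z ∈ B := by
  obtain ⟨⟨b, hb⟩, hBl⟩ := hB
  obtain ⟨γ⟩ := ‹Nonempty G›
  simpa only [(hz b γ).2] using hBl ⟨z, Set.mem_univ z, γ, b, hb, rfl⟩

variable (assoc : ∀ (e f g : T) (α β : G), mul (mul e α f) β g = mul e α (mul f β g))
include assoc

theorem IsLeftIdeal.image_mul_right {L : Set T} (hL : IsLeftIdeal mul L) (γ : G) (a : T) :
    IsLeftIdeal mul ((mul · γ a) '' L) := by
  refine ⟨hL.1.image _, ?_⟩
  rintro _ ⟨t, -, β, _, ⟨x, hx, rfl⟩, rfl⟩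
  exact ⟨mul t β x, hL.2 ⟨t, Set.mem_univ t, β, x, hx, rfl⟩, assoc t x a β γ⟩

theorem IsLeftIdeal.inter_preimage_mul_right [Nonempty G] {z : T} (hz : IsZero mul z)
    {L B : Set T} (hL : IsLeftIdeal mul L) (hB : IsLeftIdeal mul B) (γ : G) (a : T) :
    IsLeftIdeal mul (L ∩ (mul · γ a) ⁻¹' B) := by
  refine ⟨⟨z, hz.mem_of_isLeftIdeal hL, ?_⟩, ?_⟩
  · simpa only [Set.mem_preimage, (hz a γ).2] using hz.mem_of_isLeftIdeal hB
  · rintro _ ⟨t, -, β, x, ⟨hxL, hxB⟩, rfl⟩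
    refine ⟨hL.2 ⟨t, Set.mem_univ t, β, x, hxL, rfl⟩, ?_⟩
    simp only [Set.mem_preimage, assoc]
    exact hB.2 ⟨t, Set.mem_univ t, β, mul x γ a, hxB, rfl⟩

theorem IsZeroLeastLeftIdeal.image_mul_right [Nonempty G] {z : T} (hz : IsZero mul z)
    {L : Set T} (hL : IsZeroLeastLeftIdeal mul z L) (γ : G) (a : T) :
    (mul · γ a) '' L = {z} ∨ IsZeroLeastLeftIdeal mul z ((mul · γ a) '' L) := by
  obtain ⟨hLl, -, hLmin⟩ := hL
  refine or_iff_not_imp_left.2 fun hne => ⟨hLl.image_mul_right assoc γ a, hne, ?_⟩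
  intro B hB hBK
  rcases hLmin _ (hLl.inter_preimage_mul_right assoc hz hB γ a) Set.inter_subset_left
    with hC | hC
  · refine Or.inl (Set.eq_singleton_iff_unique_mem.2 ⟨hz.mem_of_isLeftIdeal hB, ?_⟩)
    intro b hb
    obtain ⟨x, hxL, rfl⟩ := hBK hb
    have hxz : x = z := Set.mem_singleton_iff.1 (hC ▸ ⟨hxL, hb⟩)
    simp only [hxz, (hz a γ).2]
  · refine Or.inr (hBK.antisymm ?_)
    rintro _ ⟨x, hxL, rfl⟩
    exact (hC.symm ▸ hxL : x ∈ L ∩ _).2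

theorem IsLeftIdeal.union_gprod_univ_isTwoSidedIdeal {L : Set T} (hL : IsLeftIdeal mul L) :
    IsTwoSidedIdeal mul (L ∪ gprod mul L Set.univ) := by
  have hne : (L ∪ gprod mul L Set.univ).Nonempty := hL.1.mono Set.subset_union_left
  refine ⟨⟨hne, ?_⟩, hne, ?_⟩
  · rintro _ ⟨t, -, β, w, hw | ⟨x, hx, δ, b, -, rfl⟩, rfl⟩
    · exact Or.inl (hL.2 ⟨t, Set.mem_univ t, β, w, hw, rfl⟩)
    · exact Or.inr ⟨mul t β x, hL.2 ⟨t, Set.mem_univ t, β, x, hx, rfl⟩, δ, b, Set.mem_univ b,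
        (assoc t x b β δ).symm⟩
  · rintro _ ⟨w, hw | ⟨x, hx, δ, b, -, rfl⟩, β, s, -, rfl⟩
    · exact Or.inr ⟨w, hw, β, s, Set.mem_univ s, rfl⟩
    · exact Or.inr ⟨x, hx, δ, mul b β s, Set.mem_univ _, assoc x b s δ β⟩

theorem IsZeroLeastTwoSidedIdeal.union_gprod_univ_eq {z : T} {H L : Set T}
    (hH : IsZeroLeastTwoSidedIdeal mul z H) (hL : IsZeroLeastLeftIdeal mul z L) (hLH : L ⊆ H) :
    L ∪ gprod mul L Set.univ = H := by
  obtain ⟨⟨-, hHr⟩, -, hHmin⟩ := hH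
  have hsub : L ∪ gprod mul L Set.univ ⊆ H := by
    rintro _ (hy | ⟨x, hx, δ, b, -, rfl⟩)
    · exact hLH hy
    · exact hHr.2 ⟨x, hLH hx, δ, b, Set.mem_univ b, rfl⟩
  refine (hHmin _ (hL.1.union_gprod_univ_isTwoSidedIdeal assoc) hsub).resolve_left fun h => ?_
  exact hL.2.1 ((hL.1.1.subset_singleton_iff).1 (h ▸ Set.subset_union_left))

end

theorem zeroLeastTwoSided_eq_union_zeroLeastLeft_general {T G : Type*} [Nonempty G]
    (mul : T → G → T → T)
    (assoc : ∀ (e f g : T) (α β : G), mul (mul e α f) β g = mul e α (mul f β g))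
    (z : T) (hz : IsZero mul z)
    (H : Set T) (hH : IsZeroLeastTwoSidedIdeal mul z H)
    (hex : ∃ L : Set T, IsZeroLeastLeftIdeal mul z L ∧ L ⊆ H) :
    H = ⋃₀ {L : Set T | IsZeroLeastLeftIdeal mul z L ∧ L ⊆ H} := by
  obtain ⟨L, hL, hLH⟩ := hex
  refine (Set.sUnion_subset fun _ hK => hK.2).antisymm' ?_
  intro y hy
  rw [← hH.union_gprod_univ_eq assoc hL hLH] at hy
  rcases hy with hy | ⟨x, hx, γ, a, -, rfl⟩
  · exact ⟨L, ⟨hL, hLH⟩, hy⟩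
  have hmem : mul x γ a ∈ (mul · γ a) '' L := ⟨x, hx, rfl⟩
  rcases hL.image_mul_right assoc hz γ a with hK | hK
  · rw [hK, Set.mem_singleton_iff] at hmem
    exact ⟨L, ⟨hL, hLH⟩, hmem ▸ hz.mem_of_isLeftIdeal hL.1⟩
  · refine ⟨_, ⟨hK, ?_⟩, hmem⟩
    rintro _ ⟨x', hx', rfl⟩
    exact hH.1.2.2 ⟨x', hLH hx', γ, a, Set.mem_univ a, rfl⟩

theorem zeroLeastTwoSided_eq_union_zeroLeastLeft {T G : Type*} [Nonempty T] [Nonempty G]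
    (mul : T → G → T → T)
    (assoc : ∀ (e f g : T) (α β : G), mul (mul e α f) β g = mul e α (mul f β g))
    (z : T) (hz : IsZero mul z)
    (H : Set T) (hH : IsZeroLeastTwoSidedIdeal mul z H)
    (hex : ∃ L : Set T, IsZeroLeastLeftIdeal mul z L ∧ L ⊆ H) :
    H = ⋃₀ {L : Set T | IsZeroLeastLeftIdeal mul z L ∧ L ⊆ H} :=
  zeroLeastTwoSided_eq_union_zeroLeastLeft_general mul assoc z hz H hH hex
end

section
/- Let (T, Γ) be a Γ-semigroup with zero 0 and let H be a 0-least Γ-two-sided ideal of T with HΓH ≠ {0}. Then for any Γ-left ideal M of T with M ⊆ H and M ≠ {0}, one has MΓM ≠ {0}. -/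
/-!
If `MΓM = {0}`, then `J = M ∪ MΓT` is a Γ-two-sided ideal inside `H` containing a nonzero
element, so `J = H` by 0-minimality. But `JΓM ⊆ MΓM ∪ MΓ(TΓM) ⊆ MΓM = {0}`, hence also
`JΓ(MΓT) = (JΓM)ΓT = {0}`, i.e. `HΓH = JΓJ = {0}`.
-/

open Set

section GammaProduct

variable {T G : Type*} {mul : T → G → T → T} {A A' B B' C : Set T}

theorem gprod_mono (hA : A ⊆ A') (hB : B ⊆ B') : gprod mul A B ⊆ gprod mul A' B' := by
  rintro x ⟨a, ha, γ, b, hb, rfl⟩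
  exact ⟨a, hA ha, γ, b, hB hb, rfl⟩

theorem gprod_union_left : gprod mul (A ∪ B) C = gprod mul A C ∪ gprod mul B C := by
  ext x
  simp only [gprod, mem_union, mem_ofPred_eq]
  grind

theorem gprod_union_right : gprod mul A (B ∪ C) = gprod mul A B ∪ gprod mul A C := by
  ext x
  simp only [gprod, mem_union, mem_ofPred_eq]
  grind

theorem gprod_assoc
    (assoc : ∀ (e f g : T) (α β : G), mul (mul e α f) β g = mul e α (mul f β g)) :
    gprod mul (gprod mul A B) C = gprod mul A (gprod mul B C) := by
  ext x
  constructor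
  · rintro ⟨_, ⟨a, ha, α, b, hb, rfl⟩, β, c, hc, rfl⟩
    exact ⟨a, ha, α, _, ⟨b, hb, β, c, hc, rfl⟩, assoc a b c α β⟩
  · rintro ⟨a, ha, α, _, ⟨b, hb, β, c, hc, rfl⟩, rfl⟩
    exact ⟨_, ⟨a, ha, α, b, hb, rfl⟩, β, c, hc, (assoc a b c α β).symm⟩

theorem gprod_nonempty [Nonempty G] (hA : A.Nonempty) (hB : B.Nonempty) :
    (gprod mul A B).Nonempty :=
  let ⟨a, ha⟩ := hA
  let ⟨b, hb⟩ := hB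
  let ⟨γ⟩ := ‹Nonempty G›
  ⟨mul a γ b, a, ha, γ, b, hb, rfl⟩

theorem gprod_singleton_left_subset_of_isZero {z : T} (hz : IsZero mul z) :
    gprod mul {z} A ⊆ {z} := by
  rintro x ⟨_, rfl, γ, a, -, rfl⟩
  exact (hz a γ).2

end GammaProduct

section LeftIdeal

variable {T G : Type*} {mul : T → G → T → T} {M : Set T}

theorem isTwoSidedIdeal_union_gprod_univ
    (assoc : ∀ (e f g : T) (α β : G), mul (mul e α f) β g = mul e α (mul f β g))
    (hM : IsLeftIdeal mul M) :
    IsTwoSidedIdeal mul (M ∪ gprod mul M univ) := by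
  have hne : (M ∪ gprod mul M univ).Nonempty := hM.1.mono subset_union_left
  refine ⟨⟨hne, ?_⟩, ⟨hne, ?_⟩⟩
  · rw [gprod_union_right, ← gprod_assoc assoc]
    exact union_subset_union hM.2 (gprod_mono hM.2 subset_rfl)
  · rw [gprod_union_left, gprod_assoc assoc]
    exact union_subset subset_union_right
      ((gprod_mono subset_rfl (subset_univ _)).trans subset_union_right)

theorem gprod_union_gprod_univ_self_subset
    (assoc : ∀ (e f g : T) (α β : G), mul (mul e α f) β g = mul e α (mul f β g))
    {z : T} (hz : IsZero mul z)
    (hM : gprod mul univ M ⊆ M) (hMM : gprod mul M M ⊆ {z}) :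
    gprod mul (M ∪ gprod mul M univ) (M ∪ gprod mul M univ) ⊆ {z} := by
  set J := M ∪ gprod mul M univ
  have hJM : gprod mul J M ⊆ {z} := by
    rw [gprod_union_left, gprod_assoc assoc]
    exact union_subset hMM ((gprod_mono subset_rfl hM).trans hMM)
  rw [gprod_union_right]
  refine union_subset hJM ?_
  calc gprod mul J (gprod mul M univ)
        = gprod mul (gprod mul J M) univ := (gprod_assoc assoc).symm
    _ ⊆ gprod mul {z} univ := gprod_mono hJM subset_rfl
    _ ⊆ {z} := gprod_singleton_left_subset_of_isZero hz

end LeftIdeal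

theorem leftIdeal_sq_ne_zero_general {T G : Type*} [Nonempty G]
    (mul : T → G → T → T)
    (assoc : ∀ (e f g : T) (α β : G), mul (mul e α f) β g = mul e α (mul f β g))
    (z : T) (hz : IsZero mul z)
    (H : Set T) (hH : IsZeroLeastTwoSidedIdeal mul z H)
    (hHH : gprod mul H H ≠ {z}) :
    ∀ M : Set T, IsLeftIdeal mul M → M ⊆ H → M ≠ {z} →
      gprod mul M M ≠ {z} := by
  intro M hM hMH hMz hMM
  obtain ⟨⟨⟨hHne, -⟩, ⟨-, hHr⟩⟩, -, hleast⟩ := hH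
  have hJH : M ∪ gprod mul M univ ⊆ H :=
    union_subset hMH ((gprod_mono hMH (subset_univ _)).trans hHr)
  have hJ : M ∪ gprod mul M univ = H := by
    refine (hleast _ (isTwoSidedIdeal_union_gprod_univ assoc hM) hJH).resolve_left fun h => ?_
    exact hMz (hM.1.subset_singleton_iff.mp (h ▸ subset_union_left))
  apply hHH
  rw [← hJ] at hHne ⊢
  exact (gprod_nonempty hHne hHne).subset_singleton_iff.mp
    (gprod_union_gprod_univ_self_subset assoc hz hM.2 hMM.subset)

theorem leftIdeal_sq_ne_zero {T G : Type*} [Nonempty T] [Nonempty G]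
    (mul : T → G → T → T)
    (assoc : ∀ (e f g : T) (α β : G), mul (mul e α f) β g = mul e α (mul f β g))
    (z : T) (hz : IsZero mul z)
    (H : Set T) (hH : IsZeroLeastTwoSidedIdeal mul z H)
    (hHH : gprod mul H H ≠ {z}) :
    ∀ M : Set T, IsLeftIdeal mul M → M ⊆ H → M ≠ {z} →
      gprod mul M M ≠ {z} :=
  leftIdeal_sq_ne_zero_general mul assoc z hz H hH hHH
end
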